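/- The critical group of an Adinkra is independent of the signature: if 𝒜 and 𝒜' are N-colored Adinkras with the same underlying colored graph but possibly different sign functions, then coker L(𝒜) ≅ coker L(𝒜'). -/

import Mathlib

open Matrix

/-- An `N`-colored Adinkra structure on a vertex set `V`: `nbr c u` is the unique
neighbor of `u` along the edge of color `c`, and `σ u w ∈ {±1}` is the sign of the
edge `uw`. The axioms say: each color class is a perfect matching (so every vertex
is incident to exactly one edge of each color, and the graph is simple), the graph
is bipartite and connected, every bi-colored subgraph is a disjoint union of
4-cycles, and every bi-colored 4-cycle has an odd number of negative edges. -/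
structure IsAdinkra {V : Type} [Fintype V] [DecidableEq V] (N : ℕ)
    (nbr : Fin N → V → V) (σ : V → V → ℤ) : Prop where
  invol : ∀ c u, nbr c (nbr c u) = u
  ne : ∀ c u, nbr c u ≠ u
  distinct : ∀ c c' u, c ≠ c' → nbr c u ≠ nbr c' u
  symm : ∀ u w, σ u w = σ w u
  sign_unit : ∀ u w, σ u w = 1 ∨ σ u w = -1
  bipartite : ∃ p : V → ZMod 2, ∀ c u, p (nbr c u) ≠ p u
  connected : (SimpleGraph.fromRel fun u w => ∃ c, nbr c u = w).Connected
  fourCycle : ∀ c c', c ≠ c' → ∀ u, nbr c (nbr c' (nbr c (nbr c' u))) = u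
  oddSign : ∀ c c', c ≠ c' → ∀ u,
    σ u (nbr c' u) * σ (nbr c' u) (nbr c (nbr c' u)) *
      σ (nbr c (nbr c' u)) (nbr c' (nbr c (nbr c' u))) *
      σ (nbr c' (nbr c (nbr c' u))) u = -1

/-- The signed adjacency matrix of an Adinkra. -/
def adinkraAdj {V : Type} [Fintype V] [DecidableEq V] {N : ℕ}
    (nbr : Fin N → V → V) (σ : V → V → ℤ) : Matrix V V ℤ :=
  Matrix.of fun u w => if ∃ c, nbr c u = w then σ u w else 0

/-- The signed Laplacian `L(𝒜) = N·I - A_σ` of an Adinkra. -/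
def adinkraLap {V : Type} [Fintype V] [DecidableEq V] {N : ℕ}
    (nbr : Fin N → V → V) (σ : V → V → ℤ) : Matrix V V ℤ :=
  (N : ℤ) • (1 : Matrix V V ℤ) - adinkraAdj nbr σ

/-!
Put `μ = σ σ'` on the edges. Both signatures are odd on every bi-colored square, so `μ`
multiplies to `1` around every square, and the color involutions lift to commuting involutions
of the double cover `V × ℤˣ` twisted by `μ`. This is an action of `(ZMod 2)^N` together with a
cocycle; on a transitive set such a cocycle is cohomologous to a character as soon as the
character it induces on a stabilizer extends, which it does over `ZMod 2`. Hence
`σ' = δ c · ε u · ε v · σ` on every edge `uv` of color `c`.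

The vertex switching `ε` conjugates `A(σ)` by a diagonal `±1` matrix. Flipping the signs of one
color `a` is conjugation by `J Γₐ`, where the signed color matrices `Γ` satisfy the Clifford
relations and `J` is the `±1` diagonal matrix of the bipartition. So `A(σ)` and `A(σ')`, hence
`L(σ)` and `L(σ')`, are conjugate by unimodular matrices and have isomorphic cokernels.
-/

theorem isConj_of_mul_self_eq_one {M : Type*} [Monoid M] {c a b : M} (hc : c * c = 1)
    (h : c * a * c = b) : IsConj a b :=
  ⟨⟨c, c, hc, hc⟩, show c * a = b * c by rw [← h, mul_assoc (c * a), hc, mul_one]⟩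

namespace Matrix

variable {V R : Type*} [DecidableEq V]

def weightedMap [Zero R] (g : V → V) (a : V → R) : Matrix V V R :=
  of fun u w => if g u = w then a u else 0

theorem weightedMap_mul [Fintype V] [NonUnitalNonAssocSemiring R] (g h : V → V) (a b : V → R) :
    weightedMap g a * weightedMap h b = weightedMap (h ∘ g) (fun u => a u * b (g u)) := by
  ext u w
  rw [mul_apply, Finset.sum_eq_single (g u)]
  · by_cases huw : h (g u) = w <;> simp [weightedMap, huw]
  · intro x _ hx
    simp [weightedMap, Ne.symm hx]
  · simp

theorem weightedMap_id_one [NonAssocSemiring R] :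
    weightedMap (id : V → V) (fun _ => (1 : R)) = 1 := by
  ext u w
  simp [weightedMap, one_apply]

theorem smul_weightedMap [MulZeroClass R] (r : R) (g : V → V) (a : V → R) :
    r • weightedMap g a = weightedMap g (fun u => r * a u) := by
  ext u w
  by_cases h : g u = w <;> simp [weightedMap, h]

theorem neg_weightedMap [Ring R] (g : V → V) (a : V → R) :
    -weightedMap g a = weightedMap g (fun u => -a u) := by
  ext u w
  by_cases h : g u = w <;> simp [weightedMap, h]

theorem diagonal_mul_weightedMap_mul_diagonal [Fintype V] [CommSemiring R] (d e : V → R)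
    (g : V → V) (a : V → R) :
    diagonal d * weightedMap g a * diagonal e = weightedMap g (fun u => d u * a u * e (g u)) := by
  ext u w
  by_cases h : g u = w
  · subst h; simp [weightedMap, mul_diagonal, diagonal_mul]
  · simp [weightedMap, mul_diagonal, diagonal_mul, h]

theorem diagonal_intUnits_mul_self [Fintype V] (ε : V → ℤˣ) :
    diagonal (fun u => (ε u : ℤ)) * diagonal (fun u => (ε u : ℤ)) = 1 := by
  simp [diagonal_mul_diagonal, Int.units_coe_mul_self]

theorem nonempty_cokernel_equiv_of_isConj [Fintype V] [CommRing R] {L L' : Matrix V V R}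
    (h : IsConj L L') :
    Nonempty (((V → R) ⧸ LinearMap.range L.mulVecLin) ≃ₗ[R]
      ((V → R) ⧸ LinearMap.range L'.mulVecLin)) := by
  obtain ⟨c, hc⟩ := h
  let e := toLinearEquiv' (c : Matrix V V R) c.invertible
  refine ⟨Submodule.Quotient.equiv _ _ e ?_⟩
  change Submodule.map (c : Matrix V V R).mulVecLin _ = _
  rw [← LinearMap.range_comp, ← mulVecLin_mul, hc.eq, mulVecLin_mul, LinearMap.range_comp,
    LinearMap.range_eq_top.mpr
      (show Function.Surjective (c : Matrix V V R).mulVecLin from e.surjective),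
    Submodule.map_top]

end Matrix

theorem AddAction.isPretransitive_of_connected {W V ι : Type*} [AddGroup W] [AddAction W V]
    (f : ι → V → V) (g : ι → W) (hg : ∀ c u, g c +ᵥ u = f c u)
    (hconn : (SimpleGraph.fromRel fun u w => ∃ c, f c u = w).Connected) :
    AddAction.IsPretransitive W V := by
  have hadj : (SimpleGraph.fromRel fun u w => ∃ c, f c u = w).Adj ≤ orbitRel W V := by
    rintro u v ⟨-, ⟨c, rfl⟩ | ⟨c, rfl⟩⟩
    · exact (orbitRel W V).symm ⟨g c, hg c u⟩
    · exact ⟨g c, hg c v⟩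
  refine ⟨fun u v => ?_⟩
  exact Relation.reflTransGen_le_of_equivalence_of_le (orbitRel W V).iseqv hadj v u
    ((SimpleGraph.reachable_iff_reflTransGen v u).mp (hconn v u))

theorem exists_cocycle_eq_character_mul_coboundary {W V : Type*} [AddCommGroup W]
    [Module (ZMod 2) W] [AddAction W V] [AddAction.IsPretransitive W V] (κ : W → V → ℤˣ)
    (hκ : ∀ w w' u, κ (w + w') u = κ w (w' +ᵥ u) * κ w' u) :
    ∃ (χ : W →+ Additive ℤˣ) (ε : V → ℤˣ), ∀ w u, κ w u = (χ w).toMul * ε u * ε (w +ᵥ u) := by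
  rcases isEmpty_or_nonempty V with hV | ⟨⟨u₀⟩⟩
  · exact ⟨0, isEmptyElim, fun _ u => isEmptyElim u⟩
  let S := AddAction.stabilizer W u₀
  let χ₀ : (AddSubgroup.toZModSubmodule 2 S) →+ Additive ℤˣ :=
    AddMonoidHom.mk' (fun z => .ofMul (κ z u₀)) fun z z' => by
      have hz' := (AddSubgroup.mem_toZModSubmodule 2).mp z'.2
      change Additive.ofMul (κ (z + z') u₀) = .ofMul (κ z u₀ * κ z' u₀)
      rw [hκ, AddAction.mem_stabilizer_iff.mp hz']
  obtain ⟨χ, hχ⟩ := LinearMap.exists_extend (χ₀.toZModLinearMap 2)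
  have hχS : ∀ z ∈ S, (χ z).toMul = κ z u₀ := fun z hz =>
    congrArg Additive.toMul
      (LinearMap.congr_fun hχ ⟨z, (AddSubgroup.mem_toZModSubmodule 2).mpr hz⟩)
  -- With `wv v` moving `u₀` to `v`, take `ε v = χ (wv v) · κ (wv v) u₀`; the identity comes from
  -- the two factorizations `w + wv u = wv v + z` with `z` in the stabilizer.
  choose wv hwv using AddAction.exists_vadd_eq W u₀
  refine ⟨χ.toAddMonoidHom, fun v => (χ (wv v)).toMul * κ (wv v) u₀, fun w u => ?_⟩
  obtain ⟨v, hv⟩ : ∃ v, w +ᵥ u = v := ⟨_, rfl⟩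
  have hz : -wv v + (w + wv u) ∈ S := by
    rw [AddAction.mem_stabilizer_iff, ← vadd_vadd, ← vadd_vadd, hwv u, hv, neg_vadd_eq_iff, hwv]
  have hsplit : w + wv u = wv v + (-wv v + (w + wv u)) := (add_neg_cancel_left _ _).symm
  generalize -wv v + (w + wv u) = z at hz hsplit
  have e1 := hκ w (wv u) u₀
  rw [hwv u, hsplit, hκ, AddAction.mem_stabilizer_iff.mp hz] at e1
  have e2 := congrArg Additive.toMul (χ.map_add w (wv u))
  rw [hsplit, χ.map_add, toMul_add, toMul_add, hχS z hz] at e2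
  have hκw : κ w u = κ (wv v) u₀ * κ z u₀ * κ (wv u) u₀ := by
    rw [e1, mul_assoc, Int.units_mul_self, mul_one]
  have hκz : κ z u₀ = (χ (wv v)).toMul * (χ w).toMul * (χ (wv u)).toMul := by
    rw [mul_assoc, ← e2, ← mul_assoc, Int.units_mul_self, one_mul]
  change κ w u = (χ w).toMul * ((χ (wv u)).toMul * κ (wv u) u₀) *
    ((χ (wv (w +ᵥ u))).toMul * κ (wv (w +ᵥ u)) u₀)
  rw [hv, hκw, hκz]
  ac_rfl

section CommutingInvolutions

variable {ι V : Type*} [Fintype ι] [DecidableEq ι]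

theorem exists_monoidHom_of_commute_of_mul_self_eq_one {M : Type*} [Monoid M] (y : ι → M)
    (hy : ∀ c, y c * y c = 1) (hcomm : ∀ c d, Commute (y c) (y d)) :
    ∃ T : Multiplicative (ι → ZMod 2) →* M, ∀ c, T (.ofAdd (Pi.single c 1)) = y c := by
  let φ : ι → Multiplicative (ZMod 2) →* M := fun c =>
    { toFun := fun a => y c ^ a.toAdd.val
      map_one' := pow_zero _
      map_mul' := fun a b => by
        rw [toAdd_mul, ZMod.val_add, ← pow_add, ← pow_eq_pow_mod _ (by rw [sq, hy])] }
  have hφ : Pairwise fun c d => ∀ a b, Commute (φ c a) (φ d b) :=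
    fun c d _ _ _ => (hcomm c d).pow_pow _ _
  refine ⟨(MonoidHom.noncommPiCoprod φ hφ).comp (MulEquiv.piMultiplicative _).toMonoidHom,
    fun c => ?_⟩
  have hsingle : MulEquiv.piMultiplicative _ (.ofAdd (Pi.single c 1 : ι → ZMod 2)) =
      Pi.mulSingle c (.ofAdd 1) := by
    funext d
    rw [MulEquiv.piMultiplicative_apply, Pi.mulSingle_apply, toAdd_ofAdd, Pi.single_apply]
    split_ifs <;> rfl
  rw [MonoidHom.comp_apply, MulEquiv.coe_toMonoidHom, hsingle,
    MonoidHom.noncommPiCoprod_mulSingle]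
  exact pow_one _

theorem exists_addAction_cocycle_lifting (f : ι → V → V) (μ : V → ι → ℤˣ)
    (hinv : ∀ c u, f c (f c u) = u) (hcomm : ∀ c d u, f c (f d u) = f d (f c u))
    (hsymm : ∀ c u, μ (f c u) c = μ u c)
    (hsq : ∀ c d u, μ u d * μ (f d u) c = μ u c * μ (f c u) d) :
    ∃ (_ : AddAction (ι → ZMod 2) V) (κ : (ι → ZMod 2) → V → ℤˣ),
      (∀ w w' u, κ (w + w') u = κ w (w' +ᵥ u) * κ w' u) ∧
      ∀ c u, (Pi.single c 1 : ι → ZMod 2) +ᵥ u = f c u ∧ κ (Pi.single c 1) u = μ u c := by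
  -- Lifting into the centralizer of the deck transformations makes every element of the action
  -- fiberwise, which is what splits it into a base action and a cocycle.
  let deck : ℤˣ → Function.End (V × ℤˣ) := fun s p => (p.1, s * p.2)
  let lift : ι → Submonoid.centralizer (Set.range deck) := fun c =>
    ⟨fun p => (f c p.1, μ p.1 c * p.2), by
      rintro _ ⟨s, rfl⟩
      funext p
      exact Prod.ext rfl (mul_left_comm _ _ _)⟩
  have lift_mul : ∀ c d p, ((lift c * lift d : Submonoid.centralizer _) : Function.End _) p =
      (f c (f d p.1), μ (f d p.1) c * (μ p.1 d * p.2)) := fun _ _ _ => rfl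
  obtain ⟨T, hT⟩ := exists_monoidHom_of_commute_of_mul_self_eq_one lift
    (fun c => Subtype.ext <| funext fun p => by
      rw [lift_mul, hinv, hsymm, ← mul_assoc, Int.units_mul_self, one_mul]; rfl)
    (fun c d => Subtype.ext <| funext fun p => by
      rw [lift_mul, lift_mul, hcomm, ← mul_assoc, ← mul_assoc, mul_comm (μ _ c), hsq,
        mul_comm (μ _ d)])
  let act : (ι → ZMod 2) → V × ℤˣ → V × ℤˣ := fun w => (T (.ofAdd w) : Function.End _)
  have fiber : ∀ w u s, act w (u, s) = ((act w (u, 1)).1, s * (act w (u, 1)).2) := by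
    intro w u s
    calc act w (u, s) = act w (deck s (u, 1)) :=
          congrArg (act w) (Prod.ext rfl (mul_one s).symm)
      _ = deck s (act w (u, 1)) :=
        (congrFun (Submonoid.mem_centralizer_iff.mp (T (.ofAdd w)).2 _ ⟨s, rfl⟩) (u, 1)).symm
  have act_add : ∀ w w' p, act (w + w') p = act w (act w' p) := fun w w' p => by
    simp only [act, ofAdd_add, map_mul]; rfl
  refine ⟨{ vadd := fun w u => (act w (u, 1)).1
            zero_vadd := fun u => by
              change (act 0 (u, 1)).1 = u
              simp only [act, ofAdd_zero, map_one]; rfl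
            add_vadd := fun w w' u => by
              change (act (w + w') (u, 1)).1 = (act w ((act w' (u, 1)).1, 1)).1
              rw [act_add, fiber w (act w' (u, 1)).1] },
    fun w u => (act w (u, 1)).2, fun w w' u => ?_, fun c u => ?_⟩
  · change (act (w + w') (u, 1)).2 = (act w ((act w' (u, 1)).1, 1)).2 * (act w' (u, 1)).2
    rw [act_add, fiber w (act w' (u, 1)).1, mul_comm]
  · have : act (Pi.single c 1) (u, 1) = (f c u, μ u c) := by
      simp only [act, hT]; exact Prod.ext rfl (mul_one _)
    exact ⟨congrArg Prod.fst this, congrArg Prod.snd this⟩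

theorem exists_eq_color_sign_mul_coboundary (f : ι → V → V) (μ : V → ι → ℤˣ)
    (hinv : ∀ c u, f c (f c u) = u) (hcomm : ∀ c d u, f c (f d u) = f d (f c u))
    (hsymm : ∀ c u, μ (f c u) c = μ u c)
    (hsq : ∀ c d u, μ u d * μ (f d u) c = μ u c * μ (f c u) d)
    (hconn : (SimpleGraph.fromRel fun u w => ∃ c, f c u = w).Connected) :
    ∃ (ε : V → ℤˣ) (δ : ι → ℤˣ), ∀ u c, μ u c = δ c * ε u * ε (f c u) := by
  obtain ⟨_, κ, hκ, hsingle⟩ := exists_addAction_cocycle_lifting f μ hinv hcomm hsymm hsq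
  have := AddAction.isPretransitive_of_connected f (fun c => Pi.single c 1)
    (fun c u => (hsingle c u).1) hconn
  obtain ⟨χ, ε, hχ⟩ := exists_cocycle_eq_character_mul_coboundary κ hκ
  exact ⟨ε, fun c => (χ (Pi.single c 1)).toMul, fun u c => by
    rw [← (hsingle c u).2, hχ, (hsingle c u).1]⟩

end CommutingInvolutions

section

variable {V : Type} [Fintype V] [DecidableEq V] {N : ℕ} {nbr : Fin N → V → V}
  {σ σ' : V → V → ℤ}

namespace IsAdinkra

theorem nbr_comm (hA : IsAdinkra N nbr σ) (c d : Fin N) (u : V) :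
    nbr c (nbr d u) = nbr d (nbr c u) := by
  rcases eq_or_ne c d with rfl | h
  · rfl
  · conv_lhs => rw [← hA.fourCycle c d h (nbr d u), hA.invol, hA.invol]

theorem sign_mul_self (hA : IsAdinkra N nbr σ) (u w : V) : σ u w * σ u w = 1 := by
  rcases hA.sign_unit u w with h | h <;> rw [h] <;> norm_num

theorem sign_path_anticomm (hA : IsAdinkra N nbr σ) {c d : Fin N} (hcd : c ≠ d) (u : V) :
    σ u (nbr d u) * σ (nbr d u) (nbr c (nbr d u)) =
      -(σ u (nbr c u) * σ (nbr c u) (nbr d (nbr c u))) := by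
  have h := hA.oddSign c d hcd u
  rw [hA.nbr_comm c d u, hA.invol, hA.symm (nbr d (nbr c u)), hA.symm (nbr c u) u] at h
  rw [hA.nbr_comm c d u]
  linear_combination
    (-(σ u (nbr d u) * σ (nbr d u) (nbr d (nbr c u)) * σ (nbr c u) (nbr d (nbr c u)) ^ 2)) *
      hA.sign_mul_self u (nbr c u) +
    (-(σ u (nbr d u) * σ (nbr d u) (nbr d (nbr c u)))) *
      hA.sign_mul_self (nbr c u) (nbr d (nbr c u)) +
    (σ u (nbr c u) * σ (nbr c u) (nbr d (nbr c u))) * h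

theorem exists_switching (hA : IsAdinkra N nbr σ) (hA' : IsAdinkra N nbr σ') :
    ∃ (ε : V → ℤˣ) (δ : Fin N → ℤˣ), ∀ u c,
      σ' u (nbr c u) = δ c * ε u * ε (nbr c u) * σ u (nbr c u) := by
  choose s hs using fun u w => Int.isUnit_iff.mpr (hA.sign_unit u w)
  choose s' hs' using fun u w => Int.isUnit_iff.mpr (hA'.sign_unit u w)
  obtain ⟨ε, δ, h⟩ := exists_eq_color_sign_mul_coboundary nbr
    (fun u c => s u (nbr c u) * s' u (nbr c u)) hA.invol hA.nbr_comm
    (fun c u => Units.ext <| by push_cast [hs, hs']; rw [hA.invol, hA.symm, hA'.symm])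
    (fun c d u => Units.ext <| by
      push_cast [hs, hs']
      rcases eq_or_ne c d with rfl | hcd
      · rfl
      · have h₁ := hA.sign_path_anticomm hcd u
        have h₂ := hA'.sign_path_anticomm hcd u
        rw [hA.nbr_comm c d u] at h₁ h₂ ⊢
        linear_combination (σ' u (nbr d u) * σ' (nbr d u) (nbr d (nbr c u))) * h₁ -
          (σ u (nbr c u) * σ (nbr c u) (nbr d (nbr c u))) * h₂)
    hA.connected
  refine ⟨ε, δ, fun u c => ?_⟩
  have h' := congrArg Units.val (h u c)
  push_cast [hs, hs'] at h'
  linear_combination σ u (nbr c u) * h' - σ' u (nbr c u) * hA.sign_mul_self u (nbr c u)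

end IsAdinkra

def cliffordGen (nbr : Fin N → V → V) (σ : V → V → ℤ) (c : Fin N) : Matrix V V ℤ :=
  weightedMap (nbr c) fun u => σ u (nbr c u)

def twistedAdj (nbr : Fin N → V → V) (σ : V → V → ℤ) (δ : Fin N → ℤˣ) : Matrix V V ℤ :=
  ∑ c, (δ c : ℤ) • cliffordGen nbr σ c

theorem adinkraAdj_eq_sum_cliffordGen (hdist : ∀ c c' u, c ≠ c' → nbr c u ≠ nbr c' u) :
    adinkraAdj nbr σ = ∑ c, cliffordGen nbr σ c := by
  ext u w
  rw [Matrix.sum_apply]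
  simp only [adinkraAdj, cliffordGen, weightedMap, of_apply]
  by_cases hex : ∃ c, nbr c u = w
  · obtain ⟨c, rfl⟩ := hex
    rw [if_pos ⟨c, rfl⟩, Finset.sum_eq_single c (fun d _ hdc => if_neg (hdist d c u hdc))
      (by simp), if_pos rfl]
  · rw [if_neg hex, Finset.sum_eq_zero fun d _ => if_neg fun h => hex ⟨d, h⟩]

theorem diagonal_conj_twistedAdj (hdist : ∀ c c' u, c ≠ c' → nbr c u ≠ nbr c' u)
    {ε : V → ℤˣ} {δ : Fin N → ℤˣ}
    (hsw : ∀ u c, σ' u (nbr c u) = δ c * ε u * ε (nbr c u) * σ u (nbr c u)) :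
    diagonal (fun u => (ε u : ℤ)) * twistedAdj nbr σ δ * diagonal (fun u => (ε u : ℤ)) =
      adinkraAdj nbr σ' := by
  rw [adinkraAdj_eq_sum_cliffordGen hdist]
  simp only [twistedAdj, Finset.mul_sum, Finset.sum_mul, cliffordGen,
    diagonal_mul_weightedMap_mul_diagonal, smul_weightedMap]
  refine Finset.sum_congr rfl fun c _ => congrArg _ (funext fun u => ?_)
  rw [hsw]
  ring

namespace IsAdinkra

theorem adinkraAdj_eq_twistedAdj_one (hA : IsAdinkra N nbr σ) :
    adinkraAdj nbr σ = twistedAdj nbr σ 1 := by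
  simp [twistedAdj, adinkraAdj_eq_sum_cliffordGen hA.distinct]

theorem cliffordGen_mul_self (hA : IsAdinkra N nbr σ) (c : Fin N) :
    cliffordGen nbr σ c * cliffordGen nbr σ c = 1 := by
  rw [cliffordGen, weightedMap_mul, ← weightedMap_id_one]
  congr 1
  · funext u; exact hA.invol c u
  · funext u; rw [hA.invol, hA.symm (nbr c u), hA.sign_mul_self]

theorem cliffordGen_anticomm (hA : IsAdinkra N nbr σ) {c d : Fin N} (hcd : c ≠ d) :
    cliffordGen nbr σ c * cliffordGen nbr σ d =
      -(cliffordGen nbr σ d * cliffordGen nbr σ c) := by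
  rw [cliffordGen, cliffordGen, weightedMap_mul, weightedMap_mul, neg_weightedMap]
  congr 1
  · funext u; exact hA.nbr_comm d c u
  · funext u; exact hA.sign_path_anticomm hcd.symm u

theorem cliffordGen_conj (hA : IsAdinkra N nbr σ) (a c : Fin N) :
    cliffordGen nbr σ a * cliffordGen nbr σ c * cliffordGen nbr σ a =
      if c = a then cliffordGen nbr σ c else -cliffordGen nbr σ c := by
  split_ifs with h
  · rw [h, hA.cliffordGen_mul_self, one_mul]
  · rw [hA.cliffordGen_anticomm (Ne.symm h), neg_mul, mul_assoc, hA.cliffordGen_mul_self,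
      mul_one]

theorem cliffordGen_conj_twistedAdj (hA : IsAdinkra N nbr σ) (a : Fin N) (δ : Fin N → ℤˣ) :
    cliffordGen nbr σ a * twistedAdj nbr σ δ * cliffordGen nbr σ a =
      -twistedAdj nbr σ (Function.update δ a (-δ a)) := by
  simp only [twistedAdj, Finset.mul_sum, Finset.sum_mul, ← Finset.sum_neg_distrib, mul_smul_comm,
    smul_mul_assoc, hA.cliffordGen_conj]
  refine Finset.sum_congr rfl fun c _ => ?_
  by_cases h : c = a
  · subst h; simp
  · simp [h]

theorem isConj_neg_twistedAdj (hA : IsAdinkra N nbr σ) (δ : Fin N → ℤˣ) :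
    IsConj (-twistedAdj nbr σ δ) (twistedAdj nbr σ δ) := by
  obtain ⟨p, hp⟩ := hA.bipartite
  let j : V → ℤˣ := fun u => (-1) ^ p u
  have hj : ∀ c u, (j u : ℤ) * j (nbr c u) = -1 := fun c u => by
    rw [← Units.val_mul, ← uzpow_add,
      (by decide : ∀ a b : ZMod 2, b ≠ a → a + b = 1) _ _ (hp c u), uzpow_one]
    rfl
  refine isConj_of_mul_self_eq_one (diagonal_intUnits_mul_self j) ?_
  simp only [twistedAdj, mul_neg, neg_mul, Finset.mul_sum, Finset.sum_mul, mul_smul_comm,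
    smul_mul_assoc, cliffordGen, diagonal_mul_weightedMap_mul_diagonal, ← Finset.sum_neg_distrib,
    ← smul_neg, neg_weightedMap]
  refine Finset.sum_congr rfl fun c _ => congrArg _ (congrArg _ (funext fun u => ?_))
  linear_combination (-σ u (nbr c u)) * hj c u

theorem isConj_twistedAdj_update (hA : IsAdinkra N nbr σ) (a : Fin N) (δ : Fin N → ℤˣ) :
    IsConj (twistedAdj nbr σ δ) (twistedAdj nbr σ (Function.update δ a (-δ a))) :=
  (isConj_of_mul_self_eq_one (hA.cliffordGen_mul_self a)
    (hA.cliffordGen_conj_twistedAdj a δ)).trans (hA.isConj_neg_twistedAdj _)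

theorem isConj_twistedAdj_one (hA : IsAdinkra N nbr σ) (δ : Fin N → ℤˣ) :
    IsConj (twistedAdj nbr σ 1) (twistedAdj nbr σ δ) := by
  let flipOn : Finset (Fin N) → Fin N → ℤˣ := fun S c => if c ∈ S then -1 else 1
  have key : ∀ S, IsConj (twistedAdj nbr σ 1) (twistedAdj nbr σ (flipOn S)) := by
    intro S
    induction S using Finset.induction_on with
    | empty => exact IsConj.refl _
    | insert a S ha ih =>
      convert ih.trans (hA.isConj_twistedAdj_update a (flipOn S)) using 2
      funext c
      by_cases h : c = a
      · subst h; simp [flipOn, ha]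
      · simp [flipOn, h]
  convert key (Finset.univ.filter fun c => δ c = -1)
  funext c
  rcases Int.units_eq_one_or (δ c) with h | h <;> simp [flipOn, h]

theorem isConj_adinkraAdj (hA : IsAdinkra N nbr σ) (hA' : IsAdinkra N nbr σ') :
    IsConj (adinkraAdj nbr σ) (adinkraAdj nbr σ') := by
  obtain ⟨ε, δ, hsw⟩ := hA.exists_switching hA'
  rw [hA.adinkraAdj_eq_twistedAdj_one]
  exact (hA.isConj_twistedAdj_one δ).trans <|
    isConj_of_mul_self_eq_one (diagonal_intUnits_mul_self ε)
      (diagonal_conj_twistedAdj hA'.distinct hsw)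

end IsAdinkra

theorem isConj_adinkraLap (h : IsConj (adinkraAdj nbr σ) (adinkraAdj nbr σ')) :
    IsConj (adinkraLap nbr σ) (adinkraLap nbr σ') := by
  obtain ⟨c, hc⟩ := h
  exact ⟨c, SemiconjBy.sub_right ((Commute.one_right _).smul_right _) hc⟩

end

theorem adinkra_critical_group_signature_independent_general {V : Type} [Fintype V]
    [DecidableEq V] {N : ℕ} (nbr : Fin N → V → V)
    (σ σ' : V → V → ℤ) (hA : IsAdinkra N nbr σ) (hA' : IsAdinkra N nbr σ') :
    Nonempty
      (((V → ℤ) ⧸ LinearMap.range (adinkraLap nbr σ).mulVecLin) ≃+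
        ((V → ℤ) ⧸ LinearMap.range (adinkraLap nbr σ').mulVecLin)) :=
  (nonempty_cokernel_equiv_of_isConj (isConj_adinkraLap (hA.isConj_adinkraAdj hA'))).map
    LinearEquiv.toAddEquiv

/-- The critical group of an Adinkra is independent of the signature: if two
`N`-colored Adinkras have the same underlying colored graph (given by the color
matchings `nbr`) but possibly different sign functions, their critical groups are
isomorphic. -/
theorem adinkra_critical_group_signature_independent {V : Type} [Fintype V]
    [DecidableEq V] {N : ℕ} (hN : 2 ≤ N) (nbr : Fin N → V → V)
    (σ σ' : V → V → ℤ) (hA : IsAdinkra N nbr σ) (hA' : IsAdinkra N nbr σ') :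
    Nonempty
      (((V → ℤ) ⧸ LinearMap.range (adinkraLap nbr σ).mulVecLin) ≃+
        ((V → ℤ) ⧸ LinearMap.range (adinkraLap nbr σ').mulVecLin)) :=
  adinkra_critical_group_signature_independent_general nbr σ σ' hA hA'
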